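/- arXiv:1504.02532 — 3 statements merged into one kernel-verified Lean document; each statement's English description precedes it below -/
import Mathlib

section
/- Let A₁, …, A_M be n×n real Metzler matrices and let Π = [π_{ij}] ∈ ℝ^{M×M} be an infinitesimal generator matrix. Then the (Mn)×(Mn) matrix A = Πᵀ ⊗ I_n + ⨁_{i=1}^M A_i is Hurwitz stable if and only if there exist positive vectors v₁, …, v_M ∈ ℝⁿ such that for every i ∈ {1, …, M}, v_iᵀ A_i + Σ_{j=1}^M π_{ij} v_jᵀ < 0 entrywise. -/
open Matrix BigOperators Kronecker

/-- A square real matrix is Metzler if all its off-diagonal entries are nonnegative. -/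
def Metzler {n : Type*} [Fintype n] [DecidableEq n] (A : Matrix n n ℝ) : Prop :=
  ∀ i j, i ≠ j → 0 ≤ A i j

/-- A square real matrix is Hurwitz stable if the real parts of all its eigenvalues
(the complex spectrum of the matrix) are negative. -/
def HurwitzStable {n : Type*} [Fintype n] [DecidableEq n] (A : Matrix n n ℝ) : Prop :=
  ∀ μ ∈ spectrum ℂ (A.map Complex.ofReal), μ.re < 0

/-- The block-diagonal matrix `⨁_{i=1}^M A_i`, indexed compatibly with the Kronecker
product `Πᵀ ⊗ I_n` (block index first). -/
def dirSum {M n : ℕ} (A : Fin M → Matrix (Fin n) (Fin n) ℝ) :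
    Matrix (Fin M × Fin n) (Fin M × Fin n) ℝ :=
  Matrix.of fun p q => if p.1 = q.1 then A p.1 p.2 q.2 else 0

/-!
Shifting a Metzler matrix `B` by a multiple `c` of the identity makes it entrywise nonnegative.
If `vᵀB < 0` for a positive `v`, pairing `v` with the entrywise modulus of an eigenvector of
`B + c` shows that every eigenvalue `μ` of `B` has `‖μ + c‖ < c`, hence `re μ < 0`.

Conversely, if `B` is Hurwitz then `t - B` is invertible for every real `t ≥ 0`. Its inverse
`R t` is entrywise nonnegative for large `t` (a Neumann series in the nonnegative `B + c`), and
nonnegativity propagates down to `t = 0` by continuity, since for `t` slightly below `s`,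
`R t = (1 - (s - t) R s)⁻¹ R s` is again a Neumann series with nonnegative terms.
Then `v = 𝟙ᵀ (-B)⁻¹` is positive with `vᵀB = -𝟙ᵀ`.

For the Markov jump system, `Πᵀ ⊗ I + ⨁ Aᵢ` is Metzler, and the `i`-th block of
`vᵀ (Πᵀ ⊗ I + ⨁ Aᵢ)` is `vᵢᵀ Aᵢ + Σⱼ πᵢⱼ vⱼᵀ`.
-/

namespace Matrix

def Nonneg {m n : Type*} (X : Matrix m n ℝ) : Prop :=
  ∀ i j, 0 ≤ X i j

theorem Nonneg.mul {l m n : Type*} [Fintype m] {X : Matrix l m ℝ} {Y : Matrix m n ℝ}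
    (hX : X.Nonneg) (hY : Y.Nonneg) : (X * Y).Nonneg :=
  fun i j => Finset.sum_nonneg fun k _ => mul_nonneg (hX i k) (hY k j)

theorem Nonneg.smul {m n : Type*} {X : Matrix m n ℝ} (hX : X.Nonneg) {c : ℝ} (hc : 0 ≤ c) :
    (c • X).Nonneg :=
  fun i j => mul_nonneg hc (hX i j)

theorem nonneg_one {n : Type*} [DecidableEq n] : (1 : Matrix n n ℝ).Nonneg := fun i j => by
  rw [one_apply]
  split_ifs <;> norm_num

theorem nonneg_sum {m n κ : Type*} {s : Finset κ} {X : κ → Matrix m n ℝ}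
    (hX : ∀ k ∈ s, (X k).Nonneg) : (∑ k ∈ s, X k).Nonneg := fun i j => by
  rw [sum_apply]
  exact Finset.sum_nonneg fun k hk => hX k hk i j

theorem isClosed_setOf_nonneg {m n : Type*} : IsClosed {X : Matrix m n ℝ | X.Nonneg} := by
  simp only [Nonneg, Set.ofPred_forall]
  exact isClosed_iInter fun i => isClosed_iInter fun j =>
    isClosed_le continuous_const (continuous_id.matrix_elem i j)

variable {ι : Type*} [Fintype ι]

theorem Nonneg.norm_lt_of_mulVec_eq_smul {N : Matrix ι ι ℝ} (hN : N.Nonneg) {v : ι → ℝ}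
    (hv : ∀ k, 0 < v k) {r : ℝ} (hvN : ∀ l, (v ᵥ* N) l < r * v l) {x : ι → ℂ} (hx : x ≠ 0)
    {μ : ℂ} (hNx : N.map Complex.ofReal *ᵥ x = μ • x) : ‖μ‖ < r := by
  set u : ι → ℝ := fun k => ‖x k‖
  have hu : ∀ k, ‖μ‖ * u k ≤ (N *ᵥ u) k := fun k => calc
    ‖μ‖ * u k = ‖∑ l, (N k l : ℂ) * x l‖ := by
      rw [← norm_mul, ← smul_eq_mul, ← Pi.smul_apply, ← hNx]
      rfl
    _ ≤ ∑ l, ‖(N k l : ℂ) * x l‖ := norm_sum_le _ _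
    _ = (N *ᵥ u) k := by simp [mulVec, dotProduct, u, abs_of_nonneg (hN k _)]
  obtain ⟨l₀, hl₀⟩ := Function.ne_iff.mp hx
  have hul₀ : 0 < u l₀ := norm_pos_iff.mpr hl₀
  have hvu : 0 < v ⬝ᵥ u := Finset.sum_pos' (fun k _ => mul_nonneg (hv k).le (norm_nonneg _))
    ⟨l₀, Finset.mem_univ _, mul_pos (hv l₀) hul₀⟩
  refine lt_of_mul_lt_mul_right ?_ hvu.le
  calc ‖μ‖ * (v ⬝ᵥ u) ≤ v ⬝ᵥ (N *ᵥ u) := by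
        rw [dotProduct, dotProduct, Finset.mul_sum]
        exact Finset.sum_le_sum fun k _ => by
          rw [mul_left_comm]
          exact mul_le_mul_of_nonneg_left (hu k) (hv k).le
    _ = (v ᵥ* N) ⬝ᵥ u := dotProduct_mulVec _ _ _
    _ < r * (v ⬝ᵥ u) := by
        rw [dotProduct, dotProduct, Finset.mul_sum]
        refine Finset.sum_lt_sum (fun l _ => ?_) ⟨l₀, Finset.mem_univ _, ?_⟩ <;> rw [← mul_assoc]
        · exact mul_le_mul_of_nonneg_right (hvN l).le (norm_nonneg _)
        · exact mul_lt_mul_of_pos_right (hvN l₀) hul₀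

variable [DecidableEq ι]

theorem Nonneg.pow {X : Matrix ι ι ℝ} (hX : X.Nonneg) (k : ℕ) : (X ^ k).Nonneg := by
  induction k with
  | zero => exact pow_zero X ▸ nonneg_one
  | succ k ih => exact pow_succ X k ▸ ih.mul hX

theorem exists_mulVec_eq_smul_of_mem_spectrum {K : Type*} [Field K] {M : Matrix ι ι K} {μ : K}
    (h : μ ∈ spectrum K M) : ∃ x ≠ 0, M *ᵥ x = μ • x := by
  rw [← spectrum_toLin', ← Module.End.hasEigenvalue_iff_mem_spectrum] at h
  obtain ⟨x, hx, hx0⟩ := h.exists_hasEigenvector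
  exact ⟨x, hx0, by simpa using Module.End.mem_eigenspace_iff.mp hx⟩

theorem isUnit_map_ofReal_iff {M : Matrix ι ι ℝ} :
    IsUnit (M.map Complex.ofReal) ↔ IsUnit M := by
  have hdet : (M.map Complex.ofReal).det = M.det := (Complex.ofRealHom.map_det M).symm
  rw [isUnit_iff_isUnit_det, isUnit_iff_isUnit_det, isUnit_iff_ne_zero, isUnit_iff_ne_zero, hdet,
    Complex.ofReal_ne_zero]

theorem ofReal_mem_spectrum_map_ofReal_iff {M : Matrix ι ι ℝ} {t : ℝ} :
    (t : ℂ) ∈ spectrum ℂ (M.map Complex.ofReal) ↔ t ∈ spectrum ℝ M := by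
  have hmap : (algebraMap ℝ (Matrix ι ι ℝ) t - M).map Complex.ofReal =
      algebraMap ℂ (Matrix ι ι ℂ) t - M.map Complex.ofReal := by
    ext i j
    simp [algebraMap_matrix_apply, apply_ite Complex.ofReal]
  rw [spectrum.mem_iff, spectrum.mem_iff, ← hmap, isUnit_map_ofReal_iff]

section LinftyOpNorm

attribute [local instance] Matrix.linftyOpNormedAddCommGroup Matrix.linftyOpNormedRing
  Matrix.linftyOpNormedAlgebra

theorem Nonneg.inverse_one_sub {X : Matrix ι ι ℝ} (hX : X.Nonneg) (hX1 : ‖X‖ < 1) :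
    (Ring.inverse (1 - X)).Nonneg :=
  isClosed_setOf_nonneg.mem_of_tendsto (hasSum_geom_series_inverse X hX1)
    (Filter.Eventually.of_forall fun _ => nonneg_sum fun k _ => hX.pow k)

theorem inverse_nonneg_of_eq_mul_one_sub {P Q X : Matrix ι ι ℝ} (hPQ : P = Q * (1 - X))
    (hQ : IsUnit Q) (hQinv : (Ring.inverse Q).Nonneg) (hX : X.Nonneg) (hX1 : ‖X‖ < 1) :
    (Ring.inverse P).Nonneg := by
  rw [hPQ, Ring.inverse_mul (Or.inl hQ)]
  exact (hX.inverse_one_sub hX1).mul hQinv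

theorem exists_resolvent_nonneg_Icc {B : Matrix ι ι ℝ} {s : ℝ} (hs : s ∈ resolventSet ℝ B)
    (hRs : (resolvent B s).Nonneg) :
    ∃ δ > 0, ∀ t ∈ Set.Icc (s - δ) s, (resolvent B t).Nonneg := by
  set R := resolvent B s
  have hQ : IsUnit (algebraMap ℝ (Matrix ι ι ℝ) s - B) := spectrum.mem_resolventSet_iff.mp hs
  have hQR : (algebraMap ℝ _ s - B) * R = 1 := Ring.mul_inverse_cancel _ hQ
  refine ⟨(‖R‖ + 1)⁻¹, by positivity, fun t ht => ?_⟩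
  have hst : (s - t) * ‖R‖ < 1 :=
    calc (s - t) * ‖R‖ ≤ (‖R‖ + 1)⁻¹ * ‖R‖ := by gcongr; linarith [ht.1]
      _ < 1 := by rw [inv_mul_lt_one₀ (by positivity)]; linarith
  refine inverse_nonneg_of_eq_mul_one_sub (X := (s - t) • R) ?_ hQ hRs
    (hRs.smul (by linarith [ht.2])) ?_
  · rw [mul_sub, mul_one, mul_smul_comm, hQR]
    simp only [Algebra.algebraMap_eq_smul_one]
    module
  · rwa [norm_smul, Real.norm_of_nonneg (by linarith [ht.2])]

theorem resolvent_nonneg_of_Icc {B : Matrix ι ι ℝ} {a b : ℝ} (hab : a ≤ b)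
    (hρ : ∀ t ∈ Set.Icc a b, t ∈ resolventSet ℝ B) (hb : (resolvent B b).Nonneg) :
    (resolvent B a).Nonneg := by
  have hcont : ContinuousOn (resolvent B) (Set.Icc a b) := fun t ht =>
    (spectrum.hasDerivAt_resolvent_const_left (hρ t ht)).continuousAt.continuousWithinAt
  have hclosed : IsClosed ({t | (resolvent B t).Nonneg} ∩ Set.Icc a b) := by
    rw [Set.inter_comm]
    exact hcont.preimage_isClosed_of_isClosed isClosed_Icc isClosed_setOf_nonneg
  refine hclosed.mem_of_ge_of_forall_exists_lt hb hab fun x ⟨hx, hax, hxb⟩ => ?_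
  obtain ⟨δ, hδ, hRδ⟩ := exists_resolvent_nonneg_Icc (hρ x ⟨hax.le, hxb⟩) hx
  exact ⟨max a (x - δ), hRδ _ ⟨le_max_right _ _, max_le hax.le (by linarith)⟩,
    le_max_left _ _, max_lt hax (by linarith)⟩

end LinftyOpNorm

end Matrix

variable {ι : Type*} [Fintype ι] [DecidableEq ι]

theorem Metzler.exists_nonneg_add_smul_one {B : Matrix ι ι ℝ} (hB : Metzler B) :
    ∃ c : ℝ, (B + c • 1).Nonneg := by
  refine ⟨∑ k, |B k k|, fun i j => ?_⟩
  rw [Matrix.add_apply, Matrix.smul_apply, one_apply]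
  rcases eq_or_ne i j with rfl | hij
  · have := Finset.single_le_sum (fun k _ => abs_nonneg (B k k)) (Finset.mem_univ i)
    simp only [if_true, smul_eq_mul, mul_one]
    linarith [neg_abs_le (B i i)]
  · simpa [hij] using hB i j hij

theorem Metzler.hurwitzStable_of_vecMul_neg {B : Matrix ι ι ℝ} (hB : Metzler B) {v : ι → ℝ}
    (hv : ∀ k, 0 < v k) (hvB : ∀ l, (v ᵥ* B) l < 0) : HurwitzStable B := by
  intro μ hμ
  obtain ⟨c, hN⟩ := hB.exists_nonneg_add_smul_one
  obtain ⟨x, hx, hBx⟩ := exists_mulVec_eq_smul_of_mem_spectrum hμ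
  have hNx : (B + c • 1).map Complex.ofReal *ᵥ x = (μ + c) • x := by
    rw [Matrix.map_add _ Complex.ofReal_add, add_mulVec, hBx,
      Matrix.map_smul' _ _ _ Complex.ofReal_mul,
      Matrix.map_one _ Complex.ofReal_zero Complex.ofReal_one, smul_mulVec, one_mulVec, add_smul]
  have hvN : ∀ l, (v ᵥ* (B + c • 1)) l < c * v l := fun l => by
    rw [vecMul_add, vecMul_smul, vecMul_one]
    exact add_lt_of_neg_left _ (hvB l)
  have hμc : ‖μ + c‖ < c := hN.norm_lt_of_mulVec_eq_smul hv hvN hx hNx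
  have hre := Complex.re_le_norm (μ + c)
  rw [Complex.add_re, Complex.ofReal_re] at hre
  linarith

theorem HurwitzStable.mem_resolventSet {B : Matrix ι ι ℝ} (hB : HurwitzStable B) {t : ℝ}
    (ht : 0 ≤ t) : t ∈ resolventSet ℝ B := by
  by_contra h
  have hre := hB t (ofReal_mem_spectrum_map_ofReal_iff.mpr h)
  rw [Complex.ofReal_re] at hre
  linarith

section LinftyOpNorm

attribute [local instance] Matrix.linftyOpNormedAddCommGroup Matrix.linftyOpNormedRing
  Matrix.linftyOpNormedAlgebra

theorem Metzler.exists_resolvent_nonneg {B : Matrix ι ι ℝ} (hB : Metzler B) :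
    ∃ T : ℝ, ∀ t, T ≤ t → (resolvent B t).Nonneg := by
  obtain ⟨c, hN⟩ := hB.exists_nonneg_add_smul_one
  set N := B + c • 1
  refine ⟨‖N‖ + 1 - c, fun t ht => ?_⟩
  have hs : 0 < t + c := by linarith [norm_nonneg N]
  have hQ : IsUnit (algebraMap ℝ (Matrix ι ι ℝ) (t + c)) := (isUnit_iff_ne_zero.mpr hs.ne').map _
  have hQinv : Ring.inverse (algebraMap ℝ (Matrix ι ι ℝ) (t + c)) = (t + c)⁻¹ • 1 := by
    have hQQ : algebraMap ℝ (Matrix ι ι ℝ) (t + c) * ((t + c)⁻¹ • 1) = 1 := by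
      rw [mul_smul_comm, mul_one, Algebra.algebraMap_eq_smul_one, smul_smul,
        inv_mul_cancel₀ hs.ne', one_smul]
    rw [← Ring.inverse_mul_cancel_left _ ((t + c)⁻¹ • 1) hQ, hQQ, mul_one]
  refine inverse_nonneg_of_eq_mul_one_sub (X := (t + c)⁻¹ • N) ?_ hQ
    (hQinv ▸ nonneg_one.smul (by positivity)) (hN.smul (by positivity)) ?_
  · rw [mul_sub, mul_one, ← Algebra.smul_def, smul_smul, mul_inv_cancel₀ hs.ne', one_smul]
    simp only [N, Algebra.algebraMap_eq_smul_one]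
    module
  · rw [norm_smul, Real.norm_of_nonneg (by positivity), inv_mul_lt_one₀ hs]
    linarith

end LinftyOpNorm

theorem exists_pos_vecMul_neg_of_resolvent_zero_nonneg {B : Matrix ι ι ℝ}
    (h0 : (0 : ℝ) ∈ resolventSet ℝ B) (hG : (resolvent B (0 : ℝ)).Nonneg) :
    ∃ v : ι → ℝ, (∀ k, 0 < v k) ∧ ∀ l, (v ᵥ* B) l < 0 := by
  have hu : IsUnit (-B) := by simpa using spectrum.mem_resolventSet_iff.mp h0
  rw [show resolvent B (0 : ℝ) = Ring.inverse (-B) by simp [resolvent]] at hG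
  set G := Ring.inverse (-B)
  have hGB : G * B = -1 := by rw [← neg_neg B, mul_neg, Ring.inverse_mul_cancel _ hu]
  have hBG : (-B) * G = 1 := Ring.mul_inverse_cancel _ hu
  refine ⟨1 ᵥ* G, fun k => ?_, fun l => ?_⟩
  · have hcol : (1 ᵥ* G) k = ∑ j, G j k := by simp [vecMul, dotProduct]
    rw [hcol]
    refine (Finset.sum_nonneg fun j _ => hG j k).lt_of_ne fun h => ?_
    -- a zero column of `G` would contradict `(-B) * G = 1`
    have hzero := (Finset.sum_eq_zero_iff_of_nonneg fun j _ => hG j k).mp h.symm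
    have hkk := congr_fun (congr_fun hBG k) k
    simp [mul_apply, hzero] at hkk
  · rw [vecMul_vecMul, hGB, vecMul_neg, vecMul_one]
    norm_num

theorem Metzler.exists_pos_vecMul_neg {B : Matrix ι ι ℝ} (hB : Metzler B)
    (hH : HurwitzStable B) : ∃ v : ι → ℝ, (∀ k, 0 < v k) ∧ ∀ l, (v ᵥ* B) l < 0 := by
  obtain ⟨T, hT⟩ := hB.exists_resolvent_nonneg
  have hρ : ∀ t ∈ Set.Icc 0 (max T 0), t ∈ resolventSet ℝ B := fun t ht =>
    hH.mem_resolventSet ht.1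
  exact exists_pos_vecMul_neg_of_resolvent_zero_nonneg (hρ 0 ⟨le_rfl, le_max_right _ _⟩)
    (resolvent_nonneg_of_Icc (le_max_right T 0) hρ (hT _ (le_max_left _ _)))

theorem Metzler.hurwitzStable_iff {B : Matrix ι ι ℝ} (hB : Metzler B) :
    HurwitzStable B ↔ ∃ v : ι → ℝ, (∀ k, 0 < v k) ∧ ∀ l, (v ᵥ* B) l < 0 :=
  ⟨hB.exists_pos_vecMul_neg, fun ⟨_, hv, hvB⟩ => hB.hurwitzStable_of_vecMul_neg hv hvB⟩

theorem metzler_kronecker_add_dirSum {n M : ℕ} {A : Fin M → Matrix (Fin n) (Fin n) ℝ}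
    (hA : ∀ i, Metzler (A i)) {P : Matrix (Fin M) (Fin M) ℝ} (hP : ∀ i j, i ≠ j → 0 ≤ P i j) :
    Metzler (Pᵀ ⊗ₖ (1 : Matrix (Fin n) (Fin n) ℝ) + dirSum A) := by
  rintro ⟨i, k⟩ ⟨j, l⟩ hne
  simp only [Matrix.add_apply, kroneckerMap_apply, dirSum, of_apply, transpose_apply, one_apply]
  rcases eq_or_ne i j with rfl | hij
  · have hkl : k ≠ l := fun h => hne (h ▸ rfl)
    simpa [hkl] using hA i k l hkl
  · simp only [hij, if_false, add_zero]
    exact mul_nonneg (hP j i hij.symm) (by split_ifs <;> norm_num)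

theorem vecMul_kronecker_add_dirSum_apply {n M : ℕ} (A : Fin M → Matrix (Fin n) (Fin n) ℝ)
    (P : Matrix (Fin M) (Fin M) ℝ) (V : Fin M × Fin n → ℝ) (i : Fin M) (l : Fin n) :
    (V ᵥ* (Pᵀ ⊗ₖ (1 : Matrix (Fin n) (Fin n) ℝ) + dirSum A)) (i, l) =
      (∑ k, V (i, k) * A i k l) + ∑ j, P i j * V (j, l) := by
  simp only [vecMul, dotProduct, Fintype.sum_prod_type, Matrix.add_apply, kroneckerMap_apply,
    dirSum, of_apply, transpose_apply, one_apply, mul_add, Finset.sum_add_distrib, mul_ite,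
    mul_zero, mul_one]
  rw [Finset.sum_comm (f := fun j k => if j = i then _ else _)]
  simp only [Finset.sum_ite_eq', Finset.mem_univ, if_true, add_comm, mul_comm (V _)]

theorem mjls_mean_stability_general (n M : ℕ) (A : Fin M → Matrix (Fin n) (Fin n) ℝ)
    (hA : ∀ i, Metzler (A i))
    (Pgen : Matrix (Fin M) (Fin M) ℝ)
    (hgen₁ : ∀ i j, i ≠ j → 0 ≤ Pgen i j) :
    HurwitzStable (Pgen.transpose ⊗ₖ (1 : Matrix (Fin n) (Fin n) ℝ) + dirSum A) ↔
      ∃ v : Fin M → Fin n → ℝ, (∀ i k, 0 < v i k) ∧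
        ∀ i l, (∑ k, v i k * A i k l) + (∑ j, Pgen i j * v j l) < 0 := by
  rw [(metzler_kronecker_add_dirSum hA hgen₁).hurwitzStable_iff]
  constructor
  · rintro ⟨V, hV, hVB⟩
    refine ⟨fun i k => V (i, k), fun i k => hV _, fun i l => ?_⟩
    simpa only [vecMul_kronecker_add_dirSum_apply] using hVB (i, l)
  · rintro ⟨v, hv, hvB⟩
    refine ⟨fun p => v p.1 p.2, fun p => hv _ _, fun ⟨i, l⟩ => ?_⟩
    simpa only [vecMul_kronecker_add_dirSum_apply] using hvB i l

/-- For Metzler matrices `A_1, …, A_M` and an infinitesimal generator `Π`,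
the matrix `A = Πᵀ ⊗ I_n + ⨁_{i=1}^M A_i` is Hurwitz stable iff there exist positive
vectors `v_1, …, v_M` with `v_iᵀ A_i + Σ_j π_{ij} v_jᵀ < 0` entrywise for every `i`. -/
theorem mjls_mean_stability (n M : ℕ) (A : Fin M → Matrix (Fin n) (Fin n) ℝ)
    (hA : ∀ i, Metzler (A i))
    (Pgen : Matrix (Fin M) (Fin M) ℝ)
    (hgen₁ : ∀ i j, i ≠ j → 0 ≤ Pgen i j)
    (hgen₂ : ∀ i, ∑ j, Pgen i j = 0) :
    HurwitzStable (Pgen.transpose ⊗ₖ (1 : Matrix (Fin n) (Fin n) ℝ) + dirSum A) ↔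
      ∃ v : Fin M → Fin n → ℝ, (∀ i k, 0 < v i k) ∧
        ∀ i l, (∑ k, v i k * A i k l) + (∑ j, Pgen i j * v j l) < 0 :=
  mjls_mean_stability_general n M A hA Pgen hgen₁
end

section
/- Let A₁, …, A_M be n×n real Metzler matrices, let Π = [π_{ij}] ∈ ℝ^{M×M} be an infinitesimal generator matrix, and let λ > 0. Then the matrix Πᵀ ⊗ I_n + ⨁_{i=1}^M A_i + λ I_{Mn} is Hurwitz stable if and only if there exist positive vectors v₁, …, v_M ∈ ℝⁿ such that for every i ∈ {1, …, M}, v_iᵀ A_i + Σ_{j=1}^M π_{ij} v_jᵀ + λ v_iᵀ < 0 entrywise. -/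
open Matrix BigOperators Kronecker

/-!
Write `B` for the matrix in question and `w = (v₁, …, v_M)` for the stacked vector: `B` is
Metzler, and the inequalities say exactly `wᵀ B < 0`. So the theorem is the characterisation of
Hurwitz stable Metzler matrices by a positive vector `w` with `wᵀ B < 0`.

If `B x = μ x`, the triangle inequality gives `Re μ · |x| ≤ B |x|` entrywise, and pairing with `w`
forces `Re μ < 0`. Conversely, for large `c` the matrix `X = 1 + B / c` is nonnegative with
spectrum in the open unit disc, so by Gelfand's formula its Neumann series converges to a
nonnegative `(1 - X)⁻¹`. Hence `(-B)⁻¹ ≥ 0`, and `wᵀ = 1ᵀ (-B)⁻¹` works.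
-/

open Filter
open scoped Pointwise

theorem Matrix.exists_mulVec_eq_smul_of_mem_spectrum_s2 {ι K : Type*} [Fintype ι] [DecidableEq ι]
    [Field K] {B : Matrix ι ι K} {μ : K} (h : μ ∈ spectrum K B) :
    ∃ x : ι → K, x ≠ 0 ∧ B *ᵥ x = μ • x := by
  rw [← Matrix.spectrum_toLin', ← Module.End.hasEigenvalue_iff_mem_spectrum] at h
  obtain ⟨x, hx⟩ := h.exists_hasEigenvector
  exact ⟨x, hx.2, by simpa using hx.apply_eq_smul⟩

theorem spectrum.one_add_smul_eq {𝕜 A : Type*} [Field 𝕜] [Ring A] [Algebra 𝕜 A] {k : 𝕜}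
    (hk : k ≠ 0) (a : A) : spectrum 𝕜 (1 + k • a) = {1} + k • spectrum 𝕜 a := by
  have := spectrum.unit_smul_eq_smul a (Units.mk0 k hk)
  rw [Units.smul_mk0, Units.smul_mk0] at this
  rw [← this, spectrum.singleton_add_eq, map_one]

theorem summable_pow_of_spectralRadius_lt_one {A : Type*} [NormedRing A] [NormedAlgebra ℂ A]
    [CompleteSpace A] {a : A} (ha : spectralRadius ℂ a < 1) : Summable (a ^ ·) := by
  obtain ⟨r, hρr, hr1⟩ := ENNReal.lt_iff_exists_nnreal_btwn.1 ha
  have hpow : ∀ᶠ n : ℕ in atTop, ‖a ^ n‖ ≤ (r : ℝ) ^ n := by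
    have hgelfand := spectrum.pow_nnnorm_pow_one_div_tendsto_nhds_spectralRadius a
    filter_upwards [hgelfand.eventually_lt_const hρr, eventually_gt_atTop 0] with n hn hn0
    rw [one_div, ENNReal.rpow_inv_lt_iff (by positivity), ENNReal.rpow_natCast] at hn
    exact_mod_cast hn.le
  exact .of_norm_bounded_eventually_nat
    (summable_geometric_of_lt_one r.2 (by exact_mod_cast hr1)) hpow

theorem eventually_norm_add_lt_self {μ : ℂ} (hμ : μ.re < 0) :
    ∀ᶠ c : ℝ in atTop, ‖μ + c‖ < c := by
  filter_upwards [eventually_gt_atTop 0, eventually_gt_atTop (‖μ‖ ^ 2 / (-2 * μ.re))] with c hc hcμ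
  rw [div_lt_iff₀ (by linarith)] at hcμ
  refine lt_of_pow_lt_pow_left₀ 2 hc.le ?_
  rw [Complex.sq_norm, Complex.normSq_apply] at hcμ ⊢
  simp only [Complex.add_re, Complex.ofReal_re, Complex.add_im, Complex.ofReal_im, add_zero]
  nlinarith

namespace Matrix

variable {ι : Type*} [Fintype ι] [DecidableEq ι]

theorem summable_pow_of_spectrum_norm_lt_one {X : Matrix ι ι ℝ}
    (hX : ∀ ν ∈ spectrum ℂ (X.map Complex.ofReal), ‖ν‖ < 1) : Summable (X ^ ·) := by
  refine Pi.summable.2 fun i => Pi.summable.2 fun j => ?_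
  -- any Banach algebra norm on complex matrices serves for Gelfand's formula
  let _ := Matrix.linftyOpNormedRing (n := ι) (α := ℂ)
  let _ := Matrix.linftyOpNormedAlgebra (n := ι) (R := ℂ) (α := ℂ)
  have _ : CompleteSpace (Matrix ι ι ℂ) := FiniteDimensional.complete ℂ _
  have _ : Nonempty ι := ⟨i⟩
  have hρ : spectralRadius ℂ (X.map Complex.ofReal) < 1 := by
    simpa using spectrum.spectralRadius_lt_of_forall_lt (X.map Complex.ofReal) (r := 1)
      fun ν hν => NNReal.coe_lt_coe.1 (hX ν hν)
  have hsum := summable_pow_of_spectralRadius_lt_one hρ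
  have hij : Summable fun k => (X ^ k).map Complex.ofRealHom i j := by
    simp only [Matrix.map_pow]
    exact Pi.summable.1 (Pi.summable.1 hsum i) j
  exact Complex.summable_ofReal.1 hij

theorem exists_nonneg_mul_one_sub_eq_one {X : Matrix ι ι ℝ} (hX0 : ∀ i j, 0 ≤ X i j)
    (hX : ∀ ν ∈ spectrum ℂ (X.map Complex.ofReal), ‖ν‖ < 1) :
    ∃ T : Matrix ι ι ℝ, (∀ i j, 0 ≤ T i j) ∧ T * (1 - X) = 1 := by
  have hsum := summable_pow_of_spectrum_norm_lt_one hX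
  refine ⟨∑' k, X ^ k, fun i j => ?_, hsum.tsum_pow_mul_one_sub⟩
  exact (Pi.hasSum.1 (Pi.hasSum.1 hsum.hasSum i) j).nonneg fun k => pow_apply_nonneg hX0 k i j

end Matrix

namespace Metzler

variable {ι : Type*} [Fintype ι] [DecidableEq ι] {B : Matrix ι ι ℝ}

theorem re_mul_norm_le_of_mulVec_eq_smul (hB : Metzler B) {μ : ℂ} {x : ι → ℂ}
    (hx : B.map Complex.ofReal *ᵥ x = μ • x) (i : ι) :
    μ.re * ‖x i‖ ≤ ∑ j, B i j * ‖x j‖ := by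
  have hoff : (μ - B i i) * x i = ∑ j ∈ Finset.univ.erase i, (B i j : ℂ) * x j := by
    have := congrFun hx i
    simp only [mulVec, dotProduct, map_apply, Pi.smul_apply, smul_eq_mul] at this
    rw [← Finset.add_sum_erase _ _ (Finset.mem_univ i)] at this
    linear_combination -this
  have hnorm : ‖(μ - B i i) * x i‖ ≤ ∑ j ∈ Finset.univ.erase i, B i j * ‖x j‖ := by
    rw [hoff]
    refine (norm_sum_le _ _).trans (Finset.sum_le_sum fun j hj => ?_)
    rw [norm_mul, Complex.norm_real,
      Real.norm_of_nonneg (hB i j (Finset.ne_of_mem_erase hj).symm)]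
  have hre : (μ.re - B i i) * ‖x i‖ ≤ ‖(μ - B i i) * x i‖ := by
    rw [norm_mul]
    gcongr
    simpa using Complex.re_le_norm (μ - B i i)
  rw [← Finset.add_sum_erase _ _ (Finset.mem_univ i)]
  linarith

theorem hurwitzStable_of_pos_vecMul_neg (hB : Metzler B) {w : ι → ℝ} (hw : ∀ i, 0 < w i)
    (hwB : ∀ j, (w ᵥ* B) j < 0) : HurwitzStable B := by
  intro μ hμ
  obtain ⟨x, hx0, hx⟩ := Matrix.exists_mulVec_eq_smul_of_mem_spectrum_s2 hμ
  obtain ⟨j, hj⟩ := Function.ne_iff.mp hx0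
  set y : ι → ℝ := fun i => ‖x i‖
  have hy : 0 ≤ y := fun i => norm_nonneg _
  have hwy : 0 < w ⬝ᵥ y :=
    Finset.sum_pos' (fun i _ => mul_nonneg (hw i).le (hy i))
      ⟨j, Finset.mem_univ j, mul_pos (hw j) (norm_pos_iff.mpr hj)⟩
  have hwBy : (w ᵥ* B) ⬝ᵥ y < 0 :=
    Finset.sum_neg' (fun i _ => mul_nonpos_of_nonpos_of_nonneg (hwB i).le (hy i))
      ⟨j, Finset.mem_univ j, mul_neg_of_neg_of_pos (hwB j) (norm_pos_iff.mpr hj)⟩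
  have : μ.re * (w ⬝ᵥ y) ≤ (w ᵥ* B) ⬝ᵥ y := by
    rw [← dotProduct_mulVec, ← smul_eq_mul, ← dotProduct_smul]
    exact dotProduct_le_dotProduct_of_nonneg_left (hB.re_mul_norm_le_of_mulVec_eq_smul hx)
      fun i => (hw i).le
  nlinarith

theorem exists_one_add_smul_nonneg_and_spectrum_norm_lt_one (hB : Metzler B)
    (hH : HurwitzStable B) :
    ∃ c : ℝ, 0 < c ∧ (∀ i j, 0 ≤ (1 + c⁻¹ • B) i j) ∧
      ∀ ν ∈ spectrum ℂ ((1 + c⁻¹ • B).map Complex.ofReal), ‖ν‖ < 1 := by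
  obtain ⟨c, hc, hdiag, hspec⟩ : ∃ c : ℝ, 0 < c ∧ (∀ i, -B i i ≤ c) ∧
      ∀ μ ∈ spectrum ℂ (B.map Complex.ofReal), ‖μ + c‖ < c :=
    ((eventually_gt_atTop 0).and ((eventually_all.2 fun i => eventually_ge_atTop _).and
      ((eventually_all_finite (Matrix.finite_spectrum _)).2
        fun μ hμ => eventually_norm_add_lt_self (hH μ hμ)))).exists
  refine ⟨c, hc, fun i j => ?_, fun ν hν => ?_⟩
  · rcases eq_or_ne i j with rfl | hij
    · have : 0 ≤ c⁻¹ * (c + B i i) := mul_nonneg (inv_nonneg.2 hc.le) (by linarith [hdiag i])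
      simpa [mul_add, hc.ne'] using this
    · simpa [one_apply_ne hij] using mul_nonneg (inv_nonneg.2 hc.le) (hB i j hij)
  · have hmap : (1 + c⁻¹ • B).map Complex.ofReal = 1 + (c⁻¹ : ℂ) • B.map Complex.ofReal := by
      ext i j
      by_cases hij : i = j <;> simp [one_apply, hij]
    rw [hmap, spectrum.one_add_smul_eq (by simpa using hc.ne')] at hν
    obtain ⟨_, rfl, _, ⟨μ, hμ, rfl⟩, rfl⟩ := hν
    have hc' : (c : ℂ) ≠ 0 := by exact_mod_cast hc.ne'
    have hν : 1 + (c : ℂ)⁻¹ • μ = (c : ℂ)⁻¹ * (μ + c) := by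
      rw [smul_eq_mul, mul_add, inv_mul_cancel₀ hc', add_comm]
    change ‖1 + (c : ℂ)⁻¹ • μ‖ < 1
    rw [hν, norm_mul, norm_inv, Complex.norm_real, Real.norm_of_nonneg hc.le, inv_mul_lt_one₀ hc]
    exact hspec μ hμ

theorem exists_nonneg_mul_eq_neg_one (hB : Metzler B) (hH : HurwitzStable B) :
    ∃ G : Matrix ι ι ℝ, (∀ i j, 0 ≤ G i j) ∧ G * B = -1 := by
  obtain ⟨c, hc, hX0, hX⟩ := hB.exists_one_add_smul_nonneg_and_spectrum_norm_lt_one hH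
  obtain ⟨T, hT0, hT⟩ := exists_nonneg_mul_one_sub_eq_one hX0 hX
  refine ⟨c⁻¹ • T, fun i j => mul_nonneg (inv_nonneg.2 hc.le) (hT0 i j), ?_⟩
  rw [sub_add_cancel_left, mul_neg, mul_smul_comm] at hT
  rw [smul_mul_assoc, ← hT, neg_neg]

theorem exists_pos_vecMul_neg_s2 (hB : Metzler B) (hH : HurwitzStable B) :
    ∃ w : ι → ℝ, (∀ i, 0 < w i) ∧ ∀ j, (w ᵥ* B) j < 0 := by
  obtain ⟨G, hG0, hGB⟩ := hB.exists_nonneg_mul_eq_neg_one hH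
  have hBG : B * G = -1 := by
    have : -B * G = 1 := mul_eq_one_comm.1 (by rw [mul_neg, hGB, neg_neg])
    rwa [neg_mul, neg_eq_iff_eq_neg] at this
  refine ⟨1 ᵥ* G, fun j => ?_, fun j => ?_⟩
  · obtain ⟨i, hi⟩ : ∃ i, G i j ≠ 0 := by
      by_contra! h
      simpa [mul_apply, h] using congrFun (congrFun hBG j) j
    exact Finset.sum_pos' (fun k _ => by simpa using hG0 k j)
      ⟨i, Finset.mem_univ _, by simpa using (hG0 i j).lt_of_ne' hi⟩
  · rw [vecMul_vecMul, hGB, vecMul_neg, vecMul_one]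
    simp

theorem hurwitzStable_iff_exists_pos_vecMul_neg (hB : Metzler B) :
    HurwitzStable B ↔ ∃ w : ι → ℝ, (∀ i, 0 < w i) ∧ ∀ j, (w ᵥ* B) j < 0 :=
  ⟨hB.exists_pos_vecMul_neg_s2, fun ⟨_, hw, hwB⟩ => hB.hurwitzStable_of_pos_vecMul_neg hw hwB⟩

theorem add {A : Matrix ι ι ℝ} (hA : Metzler A) (hB : Metzler B) : Metzler (A + B) :=
  fun i j hij => add_nonneg (hA i j hij) (hB i j hij)

theorem smul_one (c : ℝ) : Metzler (c • (1 : Matrix ι ι ℝ)) := fun i j hij => by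
  simp [one_apply_ne hij]

theorem transpose (hB : Metzler B) : Metzler Bᵀ :=
  fun i j hij => hB j i hij.symm

theorem kronecker_one {κ : Type*} [Fintype κ] [DecidableEq κ] (hB : Metzler B) :
    Metzler (B ⊗ₖ (1 : Matrix κ κ ℝ)) := by
  rintro ⟨i, k⟩ ⟨j, l⟩ hne
  rw [kroneckerMap_apply, one_apply]
  split_ifs with hkl
  · subst hkl
    simpa using hB i j fun hij => hne (by rw [hij])
  · simp

end Metzler

theorem metzler_dirSum {M n : ℕ} {A : Fin M → Matrix (Fin n) (Fin n) ℝ}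
    (hA : ∀ i, Metzler (A i)) : Metzler (dirSum A) := by
  rintro ⟨i, k⟩ ⟨j, l⟩ hne
  simp only [dirSum, of_apply]
  split_ifs with hij
  · subst hij
    exact hA i k l fun hkl => hne (by rw [hkl])
  · exact le_rfl

theorem Matrix.vecMul_transpose_kronecker_one_apply {ι κ : Type*} [Fintype ι] [Fintype κ]
    [DecidableEq κ] (P : Matrix ι ι ℝ) (w : ι × κ → ℝ) (i : ι) (l : κ) :
    (w ᵥ* (Pᵀ ⊗ₖ (1 : Matrix κ κ ℝ))) (i, l) = ∑ j, P i j * w (j, l) := by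
  simp [vecMul, dotProduct, Fintype.sum_prod_type, one_apply, mul_comm]

theorem vecMul_dirSum_apply {M n : ℕ} (A : Fin M → Matrix (Fin n) (Fin n) ℝ)
    (w : Fin M × Fin n → ℝ) (i : Fin M) (l : Fin n) :
    (w ᵥ* dirSum A) (i, l) = ∑ k, w (i, k) * A i k l := by
  simp [vecMul, dotProduct, Fintype.sum_prod_type, dirSum]

theorem mjls_decay_rate_general (n M : ℕ) (A : Fin M → Matrix (Fin n) (Fin n) ℝ)
    (hA : ∀ i, Metzler (A i))
    (Pgen : Matrix (Fin M) (Fin M) ℝ)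
    (hgen₁ : ∀ i j, i ≠ j → 0 ≤ Pgen i j)
    (lam : ℝ) :
    HurwitzStable (Pgen.transpose ⊗ₖ (1 : Matrix (Fin n) (Fin n) ℝ) + dirSum A +
        lam • (1 : Matrix (Fin M × Fin n) (Fin M × Fin n) ℝ)) ↔
      ∃ v : Fin M → Fin n → ℝ, (∀ i k, 0 < v i k) ∧
        ∀ i l, (∑ k, v i k * A i k l) + (∑ j, Pgen i j * v j l) + lam * v i l < 0 := by
  set B := Pgen.transpose ⊗ₖ (1 : Matrix (Fin n) (Fin n) ℝ) + dirSum A +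
    lam • (1 : Matrix (Fin M × Fin n) (Fin M × Fin n) ℝ) with hB
  have hMetzler : Metzler B :=
    ((Metzler.transpose hgen₁).kronecker_one.add (metzler_dirSum hA)).add (Metzler.smul_one lam)
  have hvecMul : ∀ (w : Fin M × Fin n → ℝ) i l,
      (w ᵥ* B) (i, l) =
        (∑ k, w (i, k) * A i k l) + (∑ j, Pgen i j * w (j, l)) + lam * w (i, l) := by
    intro w i l
    rw [hB, vecMul_add, vecMul_add, vecMul_smul, vecMul_one, Pi.add_apply, Pi.add_apply,
      vecMul_transpose_kronecker_one_apply, vecMul_dirSum_apply]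
    simp only [Pi.smul_apply, smul_eq_mul]
    ring
  rw [hMetzler.hurwitzStable_iff_exists_pos_vecMul_neg]
  constructor
  · rintro ⟨w, hw, hwB⟩
    exact ⟨fun i k => w (i, k), fun i k => hw (i, k), fun i l => hvecMul w i l ▸ hwB (i, l)⟩
  · rintro ⟨v, hv, hvB⟩
    exact ⟨fun p => v p.1 p.2, fun p => hv p.1 p.2, fun ⟨i, l⟩ => (hvecMul _ i l).symm ▸ hvB i l⟩

/-- For Metzler matrices `A_1, …, A_M`, an infinitesimal generator `Π`, and `λ > 0`,
the matrix `Πᵀ ⊗ I_n + ⨁_{i=1}^M A_i + λ I_{Mn}` is Hurwitz stable iff there exist positive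
vectors `v_1, …, v_M` with `v_iᵀ A_i + Σ_j π_{ij} v_jᵀ + λ v_iᵀ < 0` entrywise for every `i`. -/
theorem mjls_decay_rate (n M : ℕ) (A : Fin M → Matrix (Fin n) (Fin n) ℝ)
    (hA : ∀ i, Metzler (A i))
    (Pgen : Matrix (Fin M) (Fin M) ℝ)
    (hgen₁ : ∀ i j, i ≠ j → 0 ≤ Pgen i j)
    (hgen₂ : ∀ i, ∑ j, Pgen i j = 0)
    (lam : ℝ) (hlam : 0 < lam) :
    HurwitzStable (Pgen.transpose ⊗ₖ (1 : Matrix (Fin n) (Fin n) ℝ) + dirSum A +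
        lam • (1 : Matrix (Fin M × Fin n) (Fin M × Fin n) ℝ)) ↔
      ∃ v : Fin M → Fin n → ℝ, (∀ i k, 0 < v i k) ∧
        ∀ i l, (∑ k, v i k * A i k l) + (∑ j, Pgen i j * v j l) + lam * v i l < 0 :=
  mjls_decay_rate_general n M A hA Pgen hgen₁ lam
end

section
/- Let A be an n×n real Metzler matrix, let B ∈ ℝ^{n×s}, C ∈ ℝ^{r×n}, D ∈ ℝ^{r×s} be entrywise nonnegative, and let γ > 0. Then the following are equivalent: (i) A is Hurwitz stable and 𝟙_rᵀ(D − C A⁻¹ B) − γ 𝟙_sᵀ < 0 entrywise; (ii) there exists a positive vector v ∈ ℝⁿ satisfying vᵀA + 𝟙_rᵀC < 0 and vᵀB + 𝟙_rᵀD < γ 𝟙_sᵀ entrywise. -/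
/-!
If `v > 0` and `vᵀA < 0`, Gershgorin's theorem applied to `diag(v)⁻¹ Aᵀ diag(v)` puts every
eigenvalue of the Metzler matrix `A` in the open left half-plane.

For Metzler `A`, a vector `w > 0` with `Aw < 0` exists iff `A⁻¹` exists and is entrywise
nonpositive: `w` yields a minimum principle (`Ax ≤ 0` forces `x ≥ 0`), applied to the columns of
`A⁻¹`. If `A` is Hurwitz, such a `w` exists for `A - tI` at every `t ≥ 0`: the set of these `t` is
open, contains all large `t`, and is closed in `[0, ∞)` because `(A - tI)⁻¹` is defined and
continuous there.

Once `A⁻¹ ≤ 0`, both directions are linear algebra: `v = -(𝟙ᵀC + ε𝟙ᵀ)A⁻¹` with small `ε > 0`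
is a certificate, and conversely every certificate `v` dominates `-𝟙ᵀCA⁻¹`, which bounds the gain.
-/

open Matrix BigOperators

section

variable {n : Type*} [Fintype n] [DecidableEq n] {A : Matrix n n ℝ}

theorem HurwitzStable.notMem_spectrum (hA : HurwitzStable A) {t : ℝ} (ht : 0 ≤ t) :
    t ∉ spectrum ℝ A := by
  intro h
  rw [mem_spectrum_iff_isRoot_charpoly] at h
  have hC : (t : ℂ) ∈ spectrum ℂ (A.map Complex.ofReal) := by
    have := h.map (f := Complex.ofRealHom)
    rwa [← charpoly_map, ← mem_spectrum_iff_isRoot_charpoly] at this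
  simpa using (hA _ hC).trans_le ht

theorem HurwitzStable.isUnit_det_sub_smul_one (hA : HurwitzStable A) {t : ℝ} (ht : 0 ≤ t) :
    IsUnit (A - t • 1).det := by
  have := spectrum.notMem_iff.1 (hA.notMem_spectrum ht)
  rw [Algebra.algebraMap_eq_smul_one] at this
  simpa [Matrix.isUnit_iff_isUnit_det] using this.neg

theorem Metzler.hurwitzStable_of_vecMul_neg_s3 (hA : Metzler A) {v : n → ℝ} (hv : ∀ i, 0 < v i)
    (hvA : ∀ j, (v ᵥ* A) j < 0) : HurwitzStable A := by
  intro μ hμ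
  set d : n → ℂ := fun i => (v i : ℂ)
  set M := diagonal d⁻¹ * (A.map Complex.ofReal)ᵀ * diagonal d
  have hd : (fun i => d i * d⁻¹ i) = fun _ => 1 := by
    ext i; exact mul_inv_cancel₀ (by simpa [d] using (hv i).ne')
  have hM : M.charpoly = (A.map Complex.ofReal).charpoly := by
    rw [charpoly_mul_comm, ← Matrix.mul_assoc, diagonal_mul_diagonal, hd, diagonal_one,
      Matrix.one_mul, charpoly_transpose]
  have hμM : Module.End.HasEigenvalue (toLin' M) μ := by
    rw [Module.End.hasEigenvalue_iff_mem_spectrum, spectrum_toLin',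
      mem_spectrum_iff_isRoot_charpoly, hM, ← mem_spectrum_iff_isRoot_charpoly]
    exact hμ
  obtain ⟨k, hk⟩ := eigenvalue_mem_ball hμM
  have hMk : ∀ j, M k j = (v j / v k * A j k : ℝ) := fun j => by
    simp only [M, d, mul_diagonal, diagonal_mul, transpose_apply, map_apply, Pi.inv_apply]
    push_cast; ring
  have hnorm : ∀ j ∈ Finset.univ.erase k, ‖M k j‖ = v j / v k * A j k := fun j hj => by
    rw [hMk, Complex.norm_real, Real.norm_of_nonneg
      (mul_nonneg (div_nonneg (hv j).le (hv k).le) (hA j k (Finset.ne_of_mem_erase hj)))]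
  have hcol : ∑ j ∈ Finset.univ.erase k, v j / v k * A j k < -A k k := by
    have := hvA k
    rw [vecMul, dotProduct, ← Finset.add_sum_erase _ _ (Finset.mem_univ k)] at this
    simp_rw [div_mul_eq_mul_div]
    rw [← Finset.sum_div, div_lt_iff₀ (hv k)]
    linarith
  calc μ.re = (μ - M k k).re + A k k := by simp [hMk, div_self (hv k).ne']
    _ ≤ ‖μ - M k k‖ + A k k := by gcongr; exact Complex.re_le_norm _
    _ ≤ (∑ j ∈ Finset.univ.erase k, ‖M k j‖) + A k k := by
      gcongr; exact mem_closedBall_iff_norm.1 hk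
    _ < 0 := by rw [Finset.sum_congr rfl hnorm]; linarith

theorem Matrix.mulVec_pos_of_nonneg {P : Matrix n n ℝ} (hP : IsUnit P.det)
    (hP0 : ∀ i j, 0 ≤ P i j) {x : n → ℝ} (hx : ∀ i, 0 < x i) (i : n) : 0 < (P *ᵥ x) i := by
  obtain ⟨j, hj⟩ : ∃ j, P i j ≠ 0 := by
    by_contra! h
    exact hP.ne_zero (det_eq_zero_of_row_eq_zero i h)
  exact Finset.sum_pos' (fun j _ => mul_nonneg (hP0 i j) (hx j).le)
    ⟨j, Finset.mem_univ j, mul_pos ((hP0 i j).lt_of_ne' hj) (hx j)⟩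

theorem Metzler.nonneg_of_mulVec_nonpos (hA : Metzler A) {w : n → ℝ} (hw : ∀ i, 0 < w i)
    (hAw : ∀ i, (A *ᵥ w) i < 0) {x : n → ℝ} (hx : ∀ i, (A *ᵥ x) i ≤ 0) (i : n) : 0 ≤ x i := by
  by_contra! hxi
  obtain ⟨k, -, hk⟩ :=
    Finset.exists_max_image Finset.univ (fun j => -x j / w j) ⟨i, Finset.mem_univ i⟩
  -- `x + t • w` is the least nonnegative shift of `x` along `w`; it vanishes at `k`
  set t := -x k / w k
  have ht : 0 < t := (div_pos (neg_pos.2 hxi) (hw i)).trans_le (hk i (Finset.mem_univ i))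
  have hy : ∀ j, 0 ≤ x j + t * w j := fun j => by
    have := (div_le_iff₀ (hw j)).1 (hk j (Finset.mem_univ j)); linarith
  have hyk : x k + t * w k = 0 := by simp [t, (hw k).ne']
  have hpos : 0 ≤ (A *ᵥ (x + t • w)) k := Finset.sum_nonneg fun j _ => by
    rcases eq_or_ne k j with rfl | hkj
    · simp [hyk]
    · exact mul_nonneg (hA k j hkj) (hy j)
  have hneg : (A *ᵥ (x + t • w)) k < 0 := by
    rw [mulVec_add, mulVec_smul, Pi.add_apply, Pi.smul_apply, smul_eq_mul]
    nlinarith [hx k, hAw k]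
  exact hneg.not_ge hpos

theorem Metzler.exists_pos_mulVec_neg_iff (hA : Metzler A) :
    (∃ w : n → ℝ, (∀ i, 0 < w i) ∧ ∀ i, (A *ᵥ w) i < 0) ↔
      IsUnit A.det ∧ ∀ i j, A⁻¹ i j ≤ 0 := by
  constructor
  · rintro ⟨w, hw, hAw⟩
    have hdet : IsUnit A.det := by
      refine isUnit_iff_ne_zero.2 fun h => ?_
      obtain ⟨x, hx0, hx⟩ := exists_mulVec_eq_zero_iff.2 h
      refine hx0 (funext fun i => le_antisymm ?_ ?_)
      · simpa using hA.nonneg_of_mulVec_nonpos hw hAw (x := -x) (by simp [mulVec_neg, hx]) i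
      · exact hA.nonneg_of_mulVec_nonpos hw hAw (by simp [hx]) i
    refine ⟨hdet, fun i j => ?_⟩
    have := hA.nonneg_of_mulVec_nonpos hw hAw (x := -(A⁻¹ *ᵥ Pi.single j 1))
      (fun k => by
        rw [mulVec_neg, mulVec_mulVec, mul_nonsing_inv A hdet, one_mulVec, Pi.neg_apply,
          neg_nonpos, Pi.single_apply]
        split_ifs <;> norm_num) i
    simpa [mulVec_single_one] using this
  · rintro ⟨hdet, hinv⟩
    refine ⟨-A⁻¹ *ᵥ 1, mulVec_pos_of_nonneg (P := -A⁻¹) ?_ (fun i j => neg_nonneg.2 (hinv i j))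
      fun _ => one_pos, fun i => ?_⟩
    · rw [det_neg]
      exact ((isUnit_neg_one).pow _).mul (isUnit_nonsing_inv_det A hdet)
    · simp [neg_mulVec, mulVec_neg, mulVec_mulVec, mul_nonsing_inv A hdet]

theorem Metzler.sub_smul_one (hA : Metzler A) (t : ℝ) : Metzler (A - t • 1) := fun i j hij => by
  simpa [one_apply_ne hij] using hA i j hij

theorem Metzler.exists_pos_mulVec_neg_of_hurwitzStable (hA : Metzler A) (hH : HurwitzStable A) :
    ∃ w : n → ℝ, (∀ i, 0 < w i) ∧ ∀ i, (A *ᵥ w) i < 0 := by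
  set U := {t : ℝ | ∃ w : n → ℝ, (∀ i, 0 < w i) ∧ ∀ i, ((A - t • 1) *ᵥ w) i < 0}
  have hU : IsOpen U := isOpen_iff_mem_nhds.2 fun t ⟨w, hw, htw⟩ => by
    have hcont : ∀ i, Continuous fun s : ℝ => ((A - s • 1) *ᵥ w) i := fun i => by
      simp only [sub_mulVec, smul_mulVec, one_mulVec, Pi.sub_apply, Pi.smul_apply]
      fun_prop
    exact (Filter.eventually_all.2 fun i =>
      (hcont i).continuousAt.eventually_lt continuousAt_const (htw i)).mono fun s hs => ⟨w, hw, hs⟩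
  have hlarge : (Set.Ici 0 ∩ U).Nonempty := by
    obtain ⟨M, hM⟩ := (Set.finite_range fun i => (A *ᵥ 1) i).bddAbove
    refine ⟨max M 0 + 1, Set.mem_Ici.2 (by positivity), 1, fun _ => one_pos, fun i => ?_⟩
    have := hM ⟨i, rfl⟩
    simp only [sub_mulVec, smul_mulVec, one_mulVec, Pi.sub_apply, Pi.smul_apply,
      Pi.one_apply, smul_eq_mul, mul_one]
    linarith [le_max_left M 0]
  have hclosure : closure U ∩ Set.Ici 0 ⊆ U := by
    rintro t ⟨htU, ht⟩
    have hdet := hH.isUnit_det_sub_smul_one ht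
    refine ((hA.sub_smul_one t).exists_pos_mulVec_neg_iff).2 ⟨hdet, fun i j => ?_⟩
    have hinv : ContinuousAt (fun s : ℝ => (A - s • 1)⁻¹) t :=
      (continuousAt_matrix_inv _ (by
        rw [Ring.inverse_eq_inv']; exact continuousAt_inv₀ hdet.ne_zero)).comp (by fun_prop)
    have hcont : ContinuousAt (fun s : ℝ => (A - s • 1)⁻¹ i j) t :=
      (continuous_id.matrix_elem i j).continuousAt.comp (f := fun s : ℝ => (A - s • 1)⁻¹) hinv
    refine closure_minimal ?_ isClosed_Iic (hcont.continuousWithinAt.mem_closure_image htU)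
    rintro _ ⟨s, ⟨w, hw, hsw⟩, rfl⟩
    exact (((hA.sub_smul_one s).exists_pos_mulVec_neg_iff).1 ⟨w, hw, hsw⟩).2 i j
  obtain ⟨w, hw, hAw⟩ :=
    isPreconnected_Ici.subset_of_closure_inter_subset hU hlarge hclosure (Set.mem_Ici.2 le_rfl)
  exact ⟨w, hw, by simpa using hAw⟩

theorem Metzler.isUnit_det_and_inv_nonpos_of_hurwitzStable (hA : Metzler A)
    (hH : HurwitzStable A) :
    IsUnit A.det ∧ ∀ i j, A⁻¹ i j ≤ 0 :=
  hA.exists_pos_mulVec_neg_iff.1 (hA.exists_pos_mulVec_neg_of_hurwitzStable hH)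

theorem exists_pos_forall_add_mul_lt {ι : Type*} [Finite ι] {a b c : ι → ℝ}
    (h : ∀ j, a j < c j) : ∃ ε > 0, ∀ j, a j + ε * b j < c j := by
  have : ∀ᶠ ε in nhdsWithin (0 : ℝ) (Set.Ioi 0), ∀ j, a j + ε * b j < c j :=
    Filter.eventually_all.2 fun j => nhdsWithin_le_nhds <|
      (Continuous.tendsto' (by fun_prop) 0 (a j) (by simp)).eventually_lt_const (h j)
  obtain ⟨ε, hε, hεpos⟩ := (this.and self_mem_nhdsWithin).exists
  exact ⟨ε, hεpos, hε⟩

section Gain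

variable {ι κ : Type*} [Fintype κ] {B : Matrix n ι ℝ} {C : Matrix κ n ℝ} {D : Matrix κ ι ℝ}
  {γ : ℝ}

theorem one_vecMul_sub_lt_of_vecMul_add_nonpos (hdet : IsUnit A.det)
    (hinv : ∀ i j, A⁻¹ i j ≤ 0) (hB : ∀ i j, 0 ≤ B i j) {v : n → ℝ}
    (hvA : ∀ j, (v ᵥ* A) j + (1 ᵥ* C) j ≤ 0) (hvB : ∀ j, (v ᵥ* B) j + (1 ᵥ* D) j < γ) (j : ι) :
    (1 ᵥ* (D - C * A⁻¹ * B)) j < γ := by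
  set u := -((1 ᵥ* C) ᵥ* A⁻¹)
  -- `(vᵀA + 𝟙ᵀC) A⁻¹ = v - u` is a product of nonpositive factors
  have hu : ∀ k, u k ≤ v k := fun k => by
    have : 0 ≤ ((v ᵥ* A + 1 ᵥ* C) ᵥ* A⁻¹) k :=
      Finset.sum_nonneg fun i _ => mul_nonneg_of_nonpos_of_nonpos (hvA i) (hinv i k)
    rw [add_vecMul, vecMul_vecMul, mul_nonsing_inv A hdet, vecMul_one, Pi.add_apply] at this
    simp only [u, Pi.neg_apply]
    linarith
  have huB : (u ᵥ* B) j ≤ (v ᵥ* B) j :=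
    Finset.sum_le_sum fun i _ => mul_le_mul_of_nonneg_right (hu i) (hB i j)
  have hgain : 1 ᵥ* (D - C * A⁻¹ * B) = 1 ᵥ* D + u ᵥ* B := by
    simp only [u, vecMul_sub, neg_vecMul, vecMul_vecMul, Matrix.mul_assoc]
    abel
  rw [hgain, Pi.add_apply]
  linarith [hvB j]

theorem exists_pos_vecMul_add_neg_of_one_vecMul_sub_lt [Finite ι] (hdet : IsUnit A.det)
    (hinv : ∀ i j, A⁻¹ i j ≤ 0) (hC : ∀ i j, 0 ≤ C i j)
    (hgain : ∀ j, (1 ᵥ* (D - C * A⁻¹ * B)) j < γ) :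
    ∃ v : n → ℝ, (∀ i, 0 < v i) ∧ (∀ j, (v ᵥ* A) j + (1 ᵥ* C) j < 0) ∧
      ∀ j, (v ᵥ* B) j + (1 ᵥ* D) j < γ := by
  obtain ⟨ε, hε, hεγ⟩ :=
    exists_pos_forall_add_mul_lt (b := -(1 ᵥ* A⁻¹ ᵥ* B)) (c := fun _ => γ) hgain
  set p := 1 ᵥ* C + ε • 1
  have hp : ∀ k, 0 < p k := fun k => by
    have : 0 ≤ (1 ᵥ* C) k := Finset.sum_nonneg fun i _ => by simpa using hC i k
    simp only [p, Pi.add_apply, Pi.smul_apply, Pi.one_apply, smul_eq_mul, mul_one]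
    linarith
  refine ⟨p ᵥ* -A⁻¹, fun i => ?_, fun j => ?_, fun j => ?_⟩
  · rw [← mulVec_transpose]
    refine mulVec_pos_of_nonneg (P := (-A⁻¹)ᵀ) ?_ (fun k l => neg_nonneg.2 (hinv l k)) hp i
    rw [det_transpose, det_neg]
    exact ((isUnit_neg_one).pow _).mul (isUnit_nonsing_inv_det A hdet)
  · rw [vecMul_neg, neg_vecMul, vecMul_vecMul, nonsing_inv_mul A hdet, vecMul_one]
    simp [p, hε]
  · have : p ᵥ* -A⁻¹ ᵥ* B + 1 ᵥ* D = 1 ᵥ* (D - C * A⁻¹ * B) + ε • -(1 ᵥ* A⁻¹ ᵥ* B) := by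
      simp only [p, vecMul_neg, neg_vecMul, add_vecMul, smul_vecMul, vecMul_sub, vecMul_vecMul,
        Matrix.mul_assoc]
      module
    have := congrFun this j
    simp only [Pi.add_apply, Pi.smul_apply, smul_eq_mul] at this
    linarith [hεγ j]

end Gain

end

theorem lti_L1_gain_characterization_general (n s r : ℕ)
    (A : Matrix (Fin n) (Fin n) ℝ) (hA : Metzler A)
    (B : Matrix (Fin n) (Fin s) ℝ) (hB : ∀ i j, 0 ≤ B i j)
    (C : Matrix (Fin r) (Fin n) ℝ) (hC : ∀ i j, 0 ≤ C i j)
    (D : Matrix (Fin r) (Fin s) ℝ)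
    (γ : ℝ) :
    (HurwitzStable A ∧ ∀ j, (∑ i, (D - C * A⁻¹ * B) i j) - γ < 0) ↔
      ∃ v : Fin n → ℝ, (∀ i, 0 < v i) ∧
        (∀ j, (∑ i, v i * A i j) + (∑ i, C i j) < 0) ∧
        (∀ j, (∑ i, v i * B i j) + (∑ i, D i j) < γ) := by
  have colSum : ∀ {k l : ℕ} (M : Matrix (Fin k) (Fin l) ℝ) j, ∑ i, M i j = (1 ᵥ* M) j :=
    fun M j => by simp [vecMul, dotProduct]
  simp only [colSum, sub_neg]
  constructor
  · rintro ⟨hH, hgain⟩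
    obtain ⟨hdet, hinv⟩ := hA.isUnit_det_and_inv_nonpos_of_hurwitzStable hH
    exact exists_pos_vecMul_add_neg_of_one_vecMul_sub_lt hdet hinv hC hgain
  · rintro ⟨v, hv, hvA, hvB⟩
    have hC1 : ∀ j, 0 ≤ (1 ᵥ* C) j := fun j => colSum C j ▸ Finset.sum_nonneg fun i _ => hC i j
    have hH : HurwitzStable A := hA.hurwitzStable_of_vecMul_neg_s3 hv fun j => by
      linarith [show (v ᵥ* A) j + (1 ᵥ* C) j < 0 from hvA j, hC1 j]
    obtain ⟨hdet, hinv⟩ := hA.isUnit_det_and_inv_nonpos_of_hurwitzStable hH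
    exact ⟨hH, one_vecMul_sub_lt_of_vecMul_add_nonpos hdet hinv hB (fun j => (hvA j).le) hvB⟩

/-- For a positive LTI system `(A, B, C, D)` (with `A` Metzler and `B, C, D` nonnegative)
and `γ > 0`: `A` is Hurwitz stable with `𝟙ᵀ(D − C A⁻¹ B) − γ 𝟙ᵀ < 0` iff there exists an
entrywise positive `v` with `vᵀA + 𝟙ᵀC < 0` and `vᵀB + 𝟙ᵀD < γ𝟙ᵀ` entrywise. -/
theorem lti_L1_gain_characterization (n s r : ℕ)
    (A : Matrix (Fin n) (Fin n) ℝ) (hA : Metzler A)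
    (B : Matrix (Fin n) (Fin s) ℝ) (hB : ∀ i j, 0 ≤ B i j)
    (C : Matrix (Fin r) (Fin n) ℝ) (hC : ∀ i j, 0 ≤ C i j)
    (D : Matrix (Fin r) (Fin s) ℝ) (hD : ∀ i j, 0 ≤ D i j)
    (γ : ℝ) (hγ : 0 < γ) :
    (HurwitzStable A ∧ ∀ j, (∑ i, (D - C * A⁻¹ * B) i j) - γ < 0) ↔
      ∃ v : Fin n → ℝ, (∀ i, 0 < v i) ∧
        (∀ j, (∑ i, v i * A i j) + (∑ i, C i j) < 0) ∧
        (∀ j, (∑ i, v i * B i j) + (∑ i, D i j) < γ) :=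
  lti_L1_gain_characterization_general n s r A hA B hB C hC D γ
end
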